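/- For V = {u ∈ H¹(0,1) : u(0) = 0}, the coercivity constant of the least-squares form a(u,v) = (u' - u, v' - v)_{L²(0,1)} over V equals 1/(1 + e·sinh(1)) = 1 - tanh(1); that is, inf_{0 ≠ u ∈ V} ‖u' - u‖²_{L²} / (‖u‖²_{L²} + ‖u'‖²_{L²}) = 1 - tanh(1). -/

import Mathlib

/-!
Since `(u' - u)² = u² + u'² - (u²)'` and `u(0) = 0`, the quotient equals
`1 - u(1)² / (‖u‖² + ‖u'‖²)`. The sharp trace inequality `u(1)² ≤ tanh 1 · (‖u‖² + ‖u'‖²)` is the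
discriminant condition for the quadratic `t ↦ ∫ (u' + t cosh)² + (u + t sinh)² ≥ 0`, whose
coefficients come from `(u cosh)' = u' cosh + u sinh` and `(sinh cosh)' = cosh² + sinh²`;
`u = sinh` attains equality.
-/

open Real intervalIntegral

noncomputable def leastSquaresQuotient (L : ℝ) (u : ℝ → ℝ) : ℝ :=
  (∫ x in (0:ℝ)..L, (deriv u x - u x) ^ 2) /
    ((∫ x in (0:ℝ)..L, (u x) ^ 2) + ∫ x in (0:ℝ)..L, (deriv u x) ^ 2)

theorem integral_cosh_sq_add_sinh_sq (a b : ℝ) :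
    ∫ x in a..b, (cosh x ^ 2 + sinh x ^ 2) = sinh b * cosh b - sinh a * cosh a := by
  refine integral_eq_sub_of_hasDerivAt (f := fun x => sinh x * cosh x) (fun x _ => ?_) ?_
  · exact ((hasDerivAt_sinh x).mul (hasDerivAt_cosh x)).congr_deriv (by ring)
  · exact Continuous.intervalIntegrable (by fun_prop) _ _

section
variable {u : ℝ → ℝ}

theorem integral_deriv_mul_cosh_add_mul_sinh (hu : ContDiff ℝ 1 u) (a b : ℝ) :
    ∫ x in a..b, (deriv u x * cosh x + u x * sinh x) = u b * cosh b - u a * cosh a := by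
  have hu' : Continuous (deriv u) := hu.continuous_deriv le_rfl
  have hu0 : Continuous u := hu.continuous
  refine integral_eq_sub_of_hasDerivAt (f := fun x => u x * cosh x) (fun x _ => ?_) ?_
  · exact ((hu.differentiable one_ne_zero x).hasDerivAt).mul (hasDerivAt_cosh x)
  · exact Continuous.intervalIntegrable (by fun_prop) _ _

theorem integral_deriv_sub_sq (hu : ContDiff ℝ 1 u) (a b : ℝ) :
    ∫ x in a..b, (deriv u x - u x) ^ 2 =
      (∫ x in a..b, u x ^ 2) + (∫ x in a..b, deriv u x ^ 2) - (u b ^ 2 - u a ^ 2) := by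
  have hu' : Continuous (deriv u) := hu.continuous_deriv le_rfl
  have hu0 : Continuous u := hu.continuous
  have hsq : ∫ x in a..b, 2 * u x * deriv u x = u b ^ 2 - u a ^ 2 := by
    refine integral_eq_sub_of_hasDerivAt (f := fun x => u x ^ 2) (fun x _ => ?_) ?_
    · simpa using ((hu.differentiable one_ne_zero x).hasDerivAt).fun_pow 2
    · exact Continuous.intervalIntegrable (by fun_prop) _ _
  rw [← hsq, ← integral_add, ← integral_sub]
  · congr 1 with x; ring
  all_goals exact Continuous.intervalIntegrable (by fun_prop) _ _

theorem sq_le_tanh_mul_integral (hu : ContDiff ℝ 1 u) (h0 : u 0 = 0) {L : ℝ} (hL : 0 ≤ L) :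
    u L ^ 2 ≤ tanh L * ((∫ x in (0:ℝ)..L, u x ^ 2) + ∫ x in (0:ℝ)..L, deriv u x ^ 2) := by
  have hu' : Continuous (deriv u) := hu.continuous_deriv le_rfl
  have hu0 : Continuous u := hu.continuous
  set E := (∫ x in (0:ℝ)..L, u x ^ 2) + ∫ x in (0:ℝ)..L, deriv u x ^ 2
  have hquad : ∀ t, 0 ≤ (sinh L * cosh L) * (t * t) + (2 * (u L * cosh L)) * t + E := by
    intro t
    have hexp : (sinh L * cosh L) * (t * t) + (2 * (u L * cosh L)) * t + E =
        ∫ x in (0:ℝ)..L, ((deriv u x + t * cosh x) ^ 2 + (u x + t * sinh x) ^ 2) := by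
      have hpt : (fun x => (deriv u x + t * cosh x) ^ 2 + (u x + t * sinh x) ^ 2) = fun x =>
          (u x ^ 2 + deriv u x ^ 2) + 2 * t * (deriv u x * cosh x + u x * sinh x) +
            t ^ 2 * (cosh x ^ 2 + sinh x ^ 2) := by
        ext x; ring
      rw [hpt, integral_add, integral_add, integral_add, integral_const_mul, integral_const_mul,
        integral_deriv_mul_cosh_add_mul_sinh hu, integral_cosh_sq_add_sinh_sq]
      · simp only [E, h0, sinh_zero]; ring
      all_goals exact Continuous.intervalIntegrable (by fun_prop) _ _
    rw [hexp]
    exact integral_nonneg hL fun x _ => by positivity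
  have hdisc := discrim_le_zero hquad
  rw [discrim] at hdisc
  rw [tanh_eq_sinh_div_cosh, div_mul_eq_mul_div, le_div_iff₀ (cosh_pos L)]
  nlinarith [cosh_pos L]

theorem one_sub_tanh_le_leastSquaresQuotient (hu : ContDiff ℝ 1 u) (h0 : u 0 = 0) {L : ℝ}
    (hL : 0 < L) (hne : ∃ x ∈ Set.Icc 0 L, u x ≠ 0) :
    1 - tanh L ≤ leastSquaresQuotient L u := by
  have hE : 0 < (∫ x in (0:ℝ)..L, u x ^ 2) + ∫ x in (0:ℝ)..L, deriv u x ^ 2 := by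
    have hA : 0 < ∫ x in (0:ℝ)..L, u x ^ 2 := by
      obtain ⟨x, hx, hux⟩ := hne
      exact integral_pos hL (hu.continuous.pow 2).continuousOn (fun x _ => sq_nonneg _)
        ⟨x, hx, by positivity⟩
    have hB : 0 ≤ ∫ x in (0:ℝ)..L, deriv u x ^ 2 := integral_nonneg hL.le fun x _ => sq_nonneg _
    linarith
  rw [leastSquaresQuotient, integral_deriv_sub_sq hu, h0, le_div_iff₀ hE]
  linarith [sq_le_tanh_mul_integral hu h0 hL.le]

end

theorem leastSquaresQuotient_sinh {L : ℝ} (hL : L ≠ 0) :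
    leastSquaresQuotient L sinh = 1 - tanh L := by
  have hden : (∫ x in (0:ℝ)..L, sinh x ^ 2) + ∫ x in (0:ℝ)..L, deriv sinh x ^ 2 =
      sinh L * cosh L := by
    rw [Real.deriv_sinh, ← integral_add]
    · simpa [add_comm] using integral_cosh_sq_add_sinh_sq 0 L
    all_goals exact Continuous.intervalIntegrable (by fun_prop) _ _
  have hs : sinh L ≠ 0 := sinh_ne_zero.mpr hL
  rw [leastSquaresQuotient, integral_deriv_sub_sq contDiff_sinh, hden, sinh_zero,
    tanh_eq_sinh_div_cosh]
  field_simp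
  ring

/-- For `V = {u ∈ H¹(0,1) : u(0) = 0}` the coercivity constant of the
least-squares form `a(u,v) = (u'-u, v'-v)_{L²(0,1)}` equals `1 - tanh 1`:
`inf_{0≠u∈V} ‖u'-u‖²_{L²} / (‖u‖²_{L²} + ‖u'‖²_{L²}) = 1 - tanh 1`. (The infimum is
formalized over the dense subclass of `C¹` functions vanishing at `0`, on which the
infimum of the Rayleigh quotient takes the same value.) -/
theorem stmt_9 :
    IsGLB {r : ℝ | ∃ u : ℝ → ℝ, ContDiff ℝ 1 u ∧ u 0 = 0 ∧
        (¬ ∀ x ∈ Set.Icc (0:ℝ) 1, u x = 0) ∧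
        r = (∫ x in (0:ℝ)..1, (deriv u x - u x) ^ 2) /
            ((∫ x in (0:ℝ)..1, (u x) ^ 2) + ∫ x in (0:ℝ)..1, (deriv u x) ^ 2)}
      (1 - Real.tanh 1) := by
  refine ⟨?_, fun b hb => hb ⟨sinh, contDiff_sinh, sinh_zero, ?_, ?_⟩⟩
  · rintro r ⟨u, hu, h0, hne, rfl⟩
    push Not at hne
    exact one_sub_tanh_le_leastSquaresQuotient hu h0 one_pos hne
  · exact fun h => sinh_ne_zero.mpr one_ne_zero (h 1 ⟨zero_le_one, le_rfl⟩)
  · exact (leastSquaresQuotient_sinh one_ne_zero).symm
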